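/- arXiv:0806.3926 — 4 statements merged into one kernel-verified Lean document; each statement's English description precedes it below -/
import Mathlib

section
/- Solutions of the Ramanujan system give a uniformization of the modular foliation: let U ⊆ ℂ be open and h = (h₁,h₂,h₃) : U → ℂ³ be holomorphic with h₁′ = h₁² − h₂/12, h₂′ = 4h₁h₂ − 6h₃, h₃′ = 6h₁h₃ − h₂²/3 on U. Then for every (c₂,c₄) ∈ ℂ² and every z ∈ U with w := c₄z − c₂ ≠ 0, the curve u(z) := (h₁(z)w² + c₄w, h₂(z)w⁴, h₃(z)w⁶) satisfies u′(z) = (c₄z − c₂)^{−2} · Ra(u(z)); in particular u is tangent to the foliation ℱ(Ra). -/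
/-- The Ramanujan vector field on `ℂ³`. -/
noncomputable def Ra (t : ℂ × ℂ × ℂ) : ℂ × ℂ × ℂ :=
  (t.1 ^ 2 - t.2.1 / 12, 4 * t.1 * t.2.1 - 6 * t.2.2, 6 * t.1 * t.2.2 - t.2.1 ^ 2 / 3)

/-- Solutions of the Ramanujan system give a uniformization of the modular foliation:
if `(h₁,h₂,h₃)` solves the Ramanujan system on an open set `U ⊆ ℂ`, then for any
`(c₂,c₄) ∈ ℂ²` the curve `u(z) = (h₁(z)w² + c₄w, h₂(z)w⁴, h₃(z)w⁶)`, `w = c₄z − c₂`,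
satisfies `u′(z) = (c₄z − c₂)⁻² · Ra(u(z))` wherever `w ≠ 0`. -/
theorem ramanujan_uniformization (U : Set ℂ) (hU : IsOpen U) (h₁ h₂ h₃ : ℂ → ℂ)
    (hd₁ : ∀ z ∈ U, HasDerivAt h₁ (h₁ z ^ 2 - h₂ z / 12) z)
    (hd₂ : ∀ z ∈ U, HasDerivAt h₂ (4 * h₁ z * h₂ z - 6 * h₃ z) z)
    (hd₃ : ∀ z ∈ U, HasDerivAt h₃ (6 * h₁ z * h₃ z - h₂ z ^ 2 / 3) z)
    (c₂ c₄ : ℂ) (z : ℂ) (hz : z ∈ U) (hw : c₄ * z - c₂ ≠ 0) :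
    HasDerivAt
      (fun s : ℂ =>
        ((h₁ s * (c₄ * s - c₂) ^ 2 + c₄ * (c₄ * s - c₂),
          h₂ s * (c₄ * s - c₂) ^ 4,
          h₃ s * (c₄ * s - c₂) ^ 6) : ℂ × ℂ × ℂ))
      (((c₄ * z - c₂) ^ 2)⁻¹ •
        Ra (h₁ z * (c₄ * z - c₂) ^ 2 + c₄ * (c₄ * z - c₂),
            h₂ z * (c₄ * z - c₂) ^ 4,
            h₃ z * (c₄ * z - c₂) ^ 6)) z := by
  have hwD : HasDerivAt (fun s => c₄ * s - c₂) c₄ z := by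
    simpa using ((hasDerivAt_id z).const_mul c₄).sub_const c₂
  have hp : ∀ n : ℕ, HasDerivAt (fun s => (c₄ * s - c₂) ^ n)
      ((n : ℂ) * (c₄ * z - c₂) ^ (n - 1) * c₄) z := fun n => hwD.pow n
  have H1 := ((hd₁ z hz).mul (hp 2)).add (hwD.const_mul c₄)
  have H2 := (hd₂ z hz).mul (hp 4)
  have H3 := (hd₃ z hz).mul (hp 6)
  have H := H1.prodMk (H2.prodMk H3)
  convert H using 1
  · rfl
  simp only [Ra, Prod.smul_mk, smul_eq_mul, Prod.mk.injEq]
  norm_num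
  refine ⟨?_, ?_, ?_⟩ <;> field_simp <;> ring
end

section
/- The restriction of the Ramanujan foliation to the discriminant surface has a rational first integral: the planar vector field X = (2t₁t − t²) ∂/∂t + (t₁² − t²/4) ∂/∂t₁ annihilates the function H(t, t₁) = t₁²/t − t₁ + t/4 wherever t ≠ 0; i.e. (∂H/∂t)(2t₁t − t²) + (∂H/∂t₁)(t₁² − t²/4) = 0 for all (t, t₁) ∈ ℂ² with t ≠ 0. -/
/-- The restriction of the Ramanujan foliation to the discriminant surface has a rational
first integral: the planar vector field `X = (2t₁t − t²)∂/∂t + (t₁² − t²/4)∂/∂t₁`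
annihilates `H(t,t₁) = t₁²/t − t₁ + t/4` wherever `t ≠ 0`. -/
theorem first_integral_on_discriminant (t t₁ : ℂ) (ht : t ≠ 0) :
    deriv (fun s : ℂ => t₁ ^ 2 / s - t₁ + s / 4) t * (2 * t₁ * t - t ^ 2) +
      deriv (fun s : ℂ => s ^ 2 / t - s + t / 4) t₁ * (t₁ ^ 2 - t ^ 2 / 4) = 0 := by
  have h1 : deriv (fun s : ℂ => t₁ ^ 2 / s - t₁ + s / 4) t = -(t₁ ^ 2) / t ^ 2 + 1 / 4 := by
    have : HasDerivAt (fun s : ℂ => t₁ ^ 2 / s - t₁ + s / 4) (-(t₁ ^ 2) / t ^ 2 + 1 / 4) t := by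
      have hd : HasDerivAt (fun s : ℂ => t₁ ^ 2 / s) (-(t₁ ^ 2) / t ^ 2) t := by
        have := (hasDerivAt_inv ht).const_mul (t₁ ^ 2)
        simpa [div_eq_mul_inv, neg_div, mul_comm] using this
      simpa using ((hd.sub_const t₁).fun_add ((hasDerivAt_id t).div_const 4))
    exact this.deriv
  have h2 : deriv (fun s : ℂ => s ^ 2 / t - s + t / 4) t₁ = 2 * t₁ / t - 1 := by
    have : HasDerivAt (fun s : ℂ => s ^ 2 / t - s + t / 4) (2 * t₁ / t - 1) t₁ := by
      have hd : HasDerivAt (fun s : ℂ => s ^ 2 / t) (2 * t₁ / t) t₁ := by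
        simpa using ((hasDerivAt_pow 2 t₁).div_const t)
      simpa using ((hd.sub (hasDerivAt_id t₁)).add_const (t / 4))
    exact this.deriv
  rw [h1, h2]
  field_simp
  ring
end

section
/- Accumulation of SL(2,ℤ)-orbits in ℂ²: let (c₂,c₄) ∈ ℂ² ∖ {(0,0)} and S := {A·(c₂,c₄)ᵀ : A ∈ SL(2,ℤ)} ⊆ ℂ². If S has an accumulation point in ℂ², then Im(c₂·conj(c₄)) = 0. Conversely, if Im(c₂·conj(c₄)) = 0 and c₂, c₄ are linearly independent over ℚ (equivalently c₄ ≠ 0 and c₂/c₄ is a real irrational number), then S has an accumulation point in ℂ². -/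
open Matrix Filter

/-- The `SL(2,ℤ)`-orbit of the column vector `(c₂,c₄)ᵀ` in `ℂ²`. -/
noncomputable def sl2Orbit (c₂ c₄ : ℂ) : Set (Fin 2 → ℂ) :=
  {v | ∃ A : Matrix.SpecialLinearGroup (Fin 2) ℤ,
    v = (A.1.map (Int.cast : ℤ → ℂ)).mulVec ![c₂, c₄]}

private lemma mulVec_fin2 (A : Matrix (Fin 2) (Fin 2) ℤ) (c₂ c₄ : ℂ) (i : Fin 2) :
    (A.map (Int.cast : ℤ → ℂ)).mulVec ![c₂, c₄] i
      = (A i 0 : ℂ) * c₂ + (A i 1 : ℂ) * c₄ := by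
  simp [Matrix.mulVec, dotProduct, Fin.sum_univ_two, Matrix.map_apply]

private lemma im_comb₄ (m n : ℤ) (c₂ c₄ : ℂ) :
    (((m : ℂ) * c₂ + (n : ℂ) * c₄) * (starRingEnd ℂ) c₄).im
      = (m : ℝ) * (c₂ * (starRingEnd ℂ) c₄).im := by
  simp only [Complex.add_im, Complex.mul_im, Complex.add_re, Complex.mul_re,
    Complex.conj_re, Complex.conj_im, Complex.intCast_re, Complex.intCast_im]
  ring

private lemma im_comb₂ (m n : ℤ) (c₂ c₄ : ℂ) :
    (((m : ℂ) * c₂ + (n : ℂ) * c₄) * (starRingEnd ℂ) c₂).im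
      = -(n : ℝ) * (c₂ * (starRingEnd ℂ) c₄).im := by
  simp only [Complex.add_im, Complex.mul_im, Complex.add_re, Complex.mul_re,
    Complex.conj_re, Complex.conj_im, Complex.intCast_re, Complex.intCast_im]
  ring

set_option maxHeartbeats 1600000 in
/-- Accumulation of `SL(2,ℤ)`-orbits in `ℂ²`: for `(c₂,c₄) ≠ (0,0)`, if the orbit
`S = {A·(c₂,c₄)ᵀ : A ∈ SL(2,ℤ)}` has an accumulation point in `ℂ²` then
`Im(c₂·conj(c₄)) = 0`; conversely, if `Im(c₂·conj(c₄)) = 0` and `c₂, c₄` are linearly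
independent over `ℚ`, then `S` has an accumulation point in `ℂ²`. -/
theorem sl2_orbit_accumulation (c₂ c₄ : ℂ) (hv : (c₂, c₄) ≠ (0, 0)) :
    ((∃ x : Fin 2 → ℂ, AccPt x (Filter.principal (sl2Orbit c₂ c₄))) →
        (c₂ * (starRingEnd ℂ) c₄).im = 0) ∧
    ((c₂ * (starRingEnd ℂ) c₄).im = 0 → LinearIndependent ℚ ![c₂, c₄] →
        ∃ x : Fin 2 → ℂ, AccPt x (Filter.principal (sl2Orbit c₂ c₄))) := by
  constructor
  · rintro ⟨x, hx⟩
    by_contra hB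
    have hB0 : 0 < |(c₂ * (starRingEnd ℂ) c₄).im| := abs_pos.mpr hB
    have ha2n : 0 ≤ ‖c₂‖ := norm_nonneg _
    have ha4n : 0 ≤ ‖c₄‖ := norm_nonneg _
    set r := |(c₂ * (starRingEnd ℂ) c₄).im|
        / (2 * (‖c₂‖ + ‖c₄‖ + 1)) with hr
    have hden : 0 < 2 * (‖c₂‖ + ‖c₄‖ + 1) := by positivity
    have hr0 : 0 < r := div_pos hB0 hden
    have hrmul : r * (2 * (‖c₂‖ + ‖c₄‖ + 1))
        = |(c₂ * (starRingEnd ℂ) c₄).im| := by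
      rw [hr]; field_simp
    -- any two orbit points within distance r of x coincide
    have key : ∀ y₁ y₂, y₁ ∈ sl2Orbit c₂ c₄ → y₂ ∈ sl2Orbit c₂ c₄ →
        dist y₁ x < r → dist y₂ x < r → y₁ = y₂ := by
      rintro y₁ y₂ ⟨A, rfl⟩ ⟨A', rfl⟩ h₁ h₂
      set y := (A.1.map (Int.cast : ℤ → ℂ)).mulVec ![c₂, c₄] with hy
      set y' := (A'.1.map (Int.cast : ℤ → ℂ)).mulVec ![c₂, c₄] with hy'
      have hdd : dist y y' < 2 * r := by
        calc dist y y' ≤ dist y x + dist x y' := dist_triangle _ _ _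
          _ < r + r := by rw [dist_comm x]; exact add_lt_add h₁ h₂
          _ = 2 * r := by ring
      have hent : ∀ i : Fin 2, A.1 i 0 = A'.1 i 0 ∧ A.1 i 1 = A'.1 i 1 := by
        intro i
        have hdi : ‖y i - y' i‖ < 2 * r := by
          have h1 : dist (y i) (y' i) ≤ dist y y' := dist_le_pi_dist y y' i
          rw [Complex.dist_eq] at h1
          exact lt_of_le_of_lt h1 hdd
        set k : ℤ := A.1 i 0 - A'.1 i 0 with hk
        set l : ℤ := A.1 i 1 - A'.1 i 1 with hl
        have hdiff : y i - y' i = (k : ℂ) * c₂ + (l : ℂ) * c₄ := by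
          rw [hy, hy', mulVec_fin2, mulVec_fin2, hk, hl]
          push_cast; ring
        have habs4 : |(k : ℝ)| * |(c₂ * (starRingEnd ℂ) c₄).im|
            ≤ ‖y i - y' i‖ * ‖c₄‖ := by
          have h1 : ((y i - y' i) * (starRingEnd ℂ) c₄).im
              = (k : ℝ) * (c₂ * (starRingEnd ℂ) c₄).im := by
            rw [hdiff, im_comb₄]
          have h2 : |((y i - y' i) * (starRingEnd ℂ) c₄).im|
              ≤ ‖y i - y' i‖ * ‖c₄‖ := by
            refine (Complex.abs_im_le_norm _).trans_eq ?_
            rw [norm_mul, Complex.norm_conj]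
          rwa [h1, abs_mul] at h2
        have habs2 : |(l : ℝ)| * |(c₂ * (starRingEnd ℂ) c₄).im|
            ≤ ‖y i - y' i‖ * ‖c₂‖ := by
          have h1 : ((y i - y' i) * (starRingEnd ℂ) c₂).im
              = -(l : ℝ) * (c₂ * (starRingEnd ℂ) c₄).im := by
            rw [hdiff, im_comb₂]
          have h2 : |((y i - y' i) * (starRingEnd ℂ) c₂).im|
              ≤ ‖y i - y' i‖ * ‖c₂‖ := by
            refine (Complex.abs_im_le_norm _).trans_eq ?_
            rw [norm_mul, Complex.norm_conj]
          rwa [h1, abs_mul, abs_neg] at h2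
        have hk0 : k = 0 := by
          have hlt : |(k : ℝ)| * |(c₂ * (starRingEnd ℂ) c₄).im|
              < |(c₂ * (starRingEnd ℂ) c₄).im| := by
            nlinarith [mul_le_mul_of_nonneg_right (le_of_lt hdi) ha4n,
              mul_nonneg (le_of_lt hr0) ha2n, abs_nonneg ((k : ℝ))]
          have h1 : |(k : ℝ)| < 1 := by
            by_contra hge
            push_neg at hge
            nlinarith
          have h2 : ((|k| : ℤ) : ℝ) < 1 := by rwa [Int.cast_abs]
          have h3 : |k| < 1 := by exact_mod_cast h2
          have h4 := abs_lt.mp h3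
          omega
        have hl0 : l = 0 := by
          have hlt : |(l : ℝ)| * |(c₂ * (starRingEnd ℂ) c₄).im|
              < |(c₂ * (starRingEnd ℂ) c₄).im| := by
            nlinarith [mul_le_mul_of_nonneg_right (le_of_lt hdi) ha2n,
              mul_nonneg (le_of_lt hr0) ha4n, abs_nonneg ((l : ℝ))]
          have h1 : |(l : ℝ)| < 1 := by
            by_contra hge
            push_neg at hge
            nlinarith
          have h2 : ((|l| : ℤ) : ℝ) < 1 := by rwa [Int.cast_abs]
          have h3 : |l| < 1 := by exact_mod_cast h2
          have h4 := abs_lt.mp h3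
          omega
        have e1 : A.1 i 0 - A'.1 i 0 = 0 := hk0
        have e2 : A.1 i 1 - A'.1 i 1 = 0 := hl0
        omega
      funext i
      rw [hy, hy', mulVec_fin2, mulVec_fin2, (hent i).1, (hent i).2]
    rw [accPt_iff_nhds] at hx
    obtain ⟨y₁, ⟨hy₁b, hy₁S⟩, hy₁x⟩ := hx _ (Metric.ball_mem_nhds x hr0)
    have hd₁ : 0 < dist y₁ x := dist_pos.2 hy₁x
    obtain ⟨y₂, ⟨hy₂b, hy₂S⟩, hy₂x⟩ := hx _ (Metric.ball_mem_nhds x hd₁)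
    have h₁ : dist y₁ x < r := Metric.mem_ball.1 hy₁b
    have h₂' : dist y₂ x < dist y₁ x := Metric.mem_ball.1 hy₂b
    have heq : y₁ = y₂ := key _ _ hy₁S hy₂S h₁ (h₂'.trans h₁)
    rw [heq] at h₂'
    exact lt_irrefl _ h₂'
  · intro hB hind
    rw [LinearIndependent.pair_iff] at hind
    have hc₄ : c₄ ≠ 0 := by
      intro h
      have h2 := (hind 0 1 (by simp [h])).2
      norm_num at h2
    -- c₂ = α c₄ for a real irrational α
    have hc2ex : ∃ α : ℝ, c₂ = (α : ℂ) * c₄ := by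
      have hns : (Complex.normSq c₄ : ℂ) ≠ 0 := by
        simpa [Complex.ofReal_eq_zero, Complex.normSq_eq_zero] using hc₄
      refine ⟨(c₂ * (starRingEnd ℂ) c₄).re / Complex.normSq c₄, ?_⟩
      have h1 : c₂ * (starRingEnd ℂ) c₄ = (((c₂ * (starRingEnd ℂ) c₄).re : ℝ) : ℂ) :=
        Complex.ext (by simp) (by simpa using hB)
      have h2 : c₂ * (Complex.normSq c₄ : ℂ)
          = (((c₂ * (starRingEnd ℂ) c₄).re : ℝ) : ℂ) * c₄ := by
        rw [← Complex.mul_conj, ← h1]; ring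
      push_cast
      rw [div_mul_eq_mul_div, eq_div_iff hns]
      linear_combination h2
    obtain ⟨α, hc2⟩ := hc2ex
    have hirr : Irrational α := by
      rw [Irrational]
      intro hmem
      obtain ⟨q, hq⟩ := hmem
      have hz : (1 : ℚ) • c₂ + (-q) • c₄ = 0 := by
        rw [hc2, ← hq]
        push_cast [Rat.smul_def]
        ring
      exact one_ne_zero (hind 1 (-q) hz).1
    refine ⟨0, accPt_iff_nhds.mpr ?_⟩
    intro U hU
    obtain ⟨δ, hδ0, hδU⟩ := Metric.mem_nhds_iff.mp hU
    have hN0 : 0 < ‖c₄‖ := norm_pos_iff.mpr hc₄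
    set η := min (1/2 : ℝ) (δ / (2 * (‖c₄‖ + 1))) with hη
    have hη0 : 0 < η := lt_min (by norm_num) (by positivity)
    have hηδ : η * (2 * (‖c₄‖ + 1)) ≤ δ := by
      rw [← le_div_iff₀ (by positivity)]
      exact min_le_right _ _
    -- a small nonzero element k·α - j of ℤα + ℤ
    obtain ⟨n, hn⟩ := exists_nat_gt (1 / η)
    have hn0 : 0 < n := by
      have h1 : (0 : ℝ) < n := lt_trans (by positivity) hn
      exact_mod_cast h1
    obtain ⟨j, k, hk0, hkn, hjk⟩ := Real.exists_int_int_abs_mul_sub_le α hn0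
    have hv_lt : |(k : ℝ) * α - j| < η := by
      refine lt_of_le_of_lt hjk ?_
      rw [div_lt_iff₀ (by positivity)]
      have h1 : 1 < (n : ℝ) * η := by
        rw [mul_comm, ← div_lt_iff₀' hη0]
        exact hn
      nlinarith
    have hv_ne : (k : ℝ) * α - j ≠ 0 := by
      intro h
      have hkR : (k : ℝ) ≠ 0 := by exact_mod_cast ne_of_gt hk0
      exact (irrational_iff_ne_rational α).mp hirr j k (ne_of_gt hk0)
        ((eq_div_iff hkR).mpr (by linarith))
    -- divide the row (k, -j) by its gcd to get a coprime row (c', d')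
    set g : ℕ := Int.gcd k (-j) with hg
    have hgpos : 0 < g := Int.gcd_pos_iff.mpr (Or.inl (ne_of_gt hk0))
    obtain ⟨c', hcc⟩ : ((g : ℤ)) ∣ k := Int.gcd_dvd_left _ _
    obtain ⟨d', hdd⟩ : ((g : ℤ)) ∣ (-j) := Int.gcd_dvd_right _ _
    have hcop : Int.gcd c' d' = 1 := by
      have h1 : g = g * Int.gcd c' d' := by
        conv_lhs => rw [hg, hcc, hdd, Int.gcd_mul_left]
        simp
      have h2 : g * Int.gcd c' d' = g * 1 := by rw [mul_one]; exact h1.symm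
      exact Nat.eq_of_mul_eq_mul_left hgpos h2
    set ε : ℝ := (c' : ℝ) * α + (d' : ℝ) with hεdef
    have hgR : (1 : ℝ) ≤ (g : ℝ) := by exact_mod_cast hgpos
    have hsplit : (k : ℝ) * α - j = (g : ℝ) * ε := by
      have hkR : (k : ℝ) = (g : ℝ) * (c' : ℝ) := by exact_mod_cast congrArg Int.cast hcc
      have hjR : (-j : ℝ) = (g : ℝ) * (d' : ℝ) := by
        have : ((-j : ℤ) : ℝ) = (((g : ℤ) * d' : ℤ) : ℝ) := by exact_mod_cast congrArg Int.cast hdd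
        push_cast at this
        push_cast
        linarith
      rw [hεdef]
      rw [hkR]
      nlinarith [hjR]
    have hε_ne : ε ≠ 0 := by
      intro h
      exact hv_ne (by rw [hsplit, h, mul_zero])
    have hε_lt : |ε| < η := by
      have h1 : |(k : ℝ) * α - j| = (g : ℝ) * |ε| := by
        rw [hsplit, abs_mul, abs_of_nonneg (by positivity)]
      nlinarith [abs_nonneg ε]
    -- complete the coprime row to an SL₂(ℤ) matrix with small first row value
    have hbez := Int.gcd_eq_gcd_ab c' d'
    rw [hcop] at hbez
    set a : ℤ := Int.gcdB c' d' with ha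
    set b : ℤ := -Int.gcdA c' d' with hb
    have hdet : a * d' - b * c' = 1 := by
      have h1 : ((1 : ℕ) : ℤ) = c' * Int.gcdA c' d' + d' * Int.gcdB c' d' := hbez
      push_cast at h1
      rw [ha, hb]
      linarith
    set t : ℤ := round (((a : ℝ) * α + (b : ℝ)) / ε) with ht
    set a'' : ℤ := a - t * c' with ha''
    set b'' : ℤ := b - t * d' with hb''
    have hdet2 : a'' * d' - b'' * c' = 1 := by
      rw [ha'', hb'']
      linear_combination hdet
    set μ : ℝ := (a'' : ℝ) * α + (b'' : ℝ) with hμdef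
    have hμeq : μ = ε * (((a : ℝ) * α + (b : ℝ)) / ε - (t : ℝ)) := by
      rw [mul_sub, mul_div_cancel₀ _ hε_ne, hμdef, ha'', hb'', hεdef]
      push_cast
      ring
    have hμ_lt : |μ| < η := by
      have h1 : |μ| ≤ |ε| * (1 / 2) := by
        rw [hμeq, abs_mul, ht]
        exact mul_le_mul_of_nonneg_left (abs_sub_round _) (abs_nonneg _)
      linarith [abs_nonneg ε]
    -- the SL₂(ℤ) matrix and the corresponding small orbit point
    set A : Matrix.SpecialLinearGroup (Fin 2) ℤ :=
      ⟨!![a'', b''; c', d'], by rw [Matrix.det_fin_two_of]; linarith [hdet2]⟩ with hA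
    have hA1 : A.1 = !![a'', b''; c', d'] := rfl
    set y : Fin 2 → ℂ := (A.1.map (Int.cast : ℤ → ℂ)).mulVec ![c₂, c₄] with hyd
    have hy0 : y 0 = ((μ : ℝ) : ℂ) * c₄ := by
      rw [hyd, mulVec_fin2, hA1, hc2, hμdef]
      simp only [Matrix.of_apply, Matrix.cons_val', Matrix.cons_val_zero, Matrix.cons_val_one,
        Matrix.head_cons, Matrix.empty_val', Matrix.cons_val_fin_one, Matrix.head_fin_const]
      push_cast
      ring
    have hy1 : y 1 = ((ε : ℝ) : ℂ) * c₄ := by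
      rw [hyd, mulVec_fin2, hA1, hc2, hεdef]
      simp only [Matrix.of_apply, Matrix.cons_val', Matrix.cons_val_zero, Matrix.cons_val_one,
        Matrix.head_cons, Matrix.empty_val', Matrix.cons_val_fin_one, Matrix.head_fin_const]
      push_cast
      ring
    refine ⟨y, ⟨?_, ⟨A, hyd⟩⟩, ?_⟩
    · apply hδU
      rw [Metric.mem_ball, dist_zero_right, pi_norm_lt_iff hδ0]
      intro i
      have hbound : ∀ s : ℝ, |s| < η → ‖((s : ℝ) : ℂ) * c₄‖ < δ := by
        intro s hs
        rw [norm_mul, Complex.norm_real, Real.norm_eq_abs]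
        nlinarith [mul_lt_mul_of_pos_right hs hN0, mul_pos hη0 hN0,
          norm_nonneg c₄, abs_nonneg s]
      fin_cases i
      · show ‖y 0‖ < δ
        rw [hy0]; exact hbound μ hμ_lt
      · show ‖y 1‖ < δ
        rw [hy1]; exact hbound ε hε_lt
    · intro h
      have h1 := congrFun h 1
      rw [hy1, Pi.zero_apply] at h1
      rcases mul_eq_zero.mp h1 with h2 | h2
      · exact hε_ne (by exact_mod_cast h2)
      · exact hc₄ h2
end

section
/- Solutions of the Darboux–Halphen type system yield solutions of the Ramanujan system via symmetric functions: let U ⊆ ℂ be open and θ₁,θ₂,θ₃ : U → ℂ holomorphic with θᵢ′ = θᵢ(θⱼ + θ_k) − θⱼθ_k for each permutation {i,j,k} = {1,2,3}. Define h₁ := (θ₁+θ₂+θ₃)/3, h₂ := −4 Σ_{1≤i<j≤3} (h₁−θᵢ)(h₁−θⱼ), h₃ := −4(h₁−θ₁)(h₁−θ₂)(h₁−θ₃). Then h₁′ = h₁² − h₂/12, h₂′ = 4h₁h₂ − 6h₃, and h₃′ = 6h₁h₃ − h₂²/3 on U. -/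
/-- Solutions of the Darboux–Halphen type system `θᵢ′ = θᵢ(θⱼ + θ_k) − θⱼθ_k` yield, via
elementary symmetric functions, solutions of the Ramanujan system
`h₁′ = h₁² − h₂/12`, `h₂′ = 4h₁h₂ − 6h₃`, `h₃′ = 6h₁h₃ − h₂²/3`. -/
theorem darbouxHalphen_to_ramanujan (U : Set ℂ) (hU : IsOpen U) (θ₁ θ₂ θ₃ : ℂ → ℂ)
    (hd₁ : ∀ z ∈ U, HasDerivAt θ₁ (θ₁ z * (θ₂ z + θ₃ z) - θ₂ z * θ₃ z) z)
    (hd₂ : ∀ z ∈ U, HasDerivAt θ₂ (θ₂ z * (θ₁ z + θ₃ z) - θ₁ z * θ₃ z) z)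
    (hd₃ : ∀ z ∈ U, HasDerivAt θ₃ (θ₃ z * (θ₁ z + θ₂ z) - θ₁ z * θ₂ z) z)
    (h₁ h₂ h₃ : ℂ → ℂ)
    (H₁ : h₁ = fun z => (θ₁ z + θ₂ z + θ₃ z) / 3)
    (H₂ : h₂ = fun z => -4 * ((h₁ z - θ₁ z) * (h₁ z - θ₂ z) +
        (h₁ z - θ₁ z) * (h₁ z - θ₃ z) + (h₁ z - θ₂ z) * (h₁ z - θ₃ z)))
    (H₃ : h₃ = fun z => -4 * ((h₁ z - θ₁ z) * (h₁ z - θ₂ z) * (h₁ z - θ₃ z))) :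
    ∀ z ∈ U,
      HasDerivAt h₁ (h₁ z ^ 2 - h₂ z / 12) z ∧
      HasDerivAt h₂ (4 * h₁ z * h₂ z - 6 * h₃ z) z ∧
      HasDerivAt h₃ (6 * h₁ z * h₃ z - h₂ z ^ 2 / 3) z := by
  subst H₁ H₂ H₃
  intro z hz
  have D1 := hd₁ z hz
  have D2 := hd₂ z hz
  have D3 := hd₃ z hz
  have DH : HasDerivAt (fun z => (θ₁ z + θ₂ z + θ₃ z) / 3)
      ((θ₁ z * (θ₂ z + θ₃ z) - θ₂ z * θ₃ z + (θ₂ z * (θ₁ z + θ₃ z) - θ₁ z * θ₃ z) +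
        (θ₃ z * (θ₁ z + θ₂ z) - θ₁ z * θ₂ z)) / 3) z :=
    ((D1.add D2).add D3).div_const 3
  have DA := DH.sub D1
  have DB := DH.sub D2
  have DC := DH.sub D3
  refine ⟨?_, ?_, ?_⟩
  · convert DH using 1
    ring
  · refine HasDerivAt.congr_deriv ((((DA.mul DB).add (DA.mul DC)).add (DB.mul DC)).const_mul (-4)) ?_
    simp only [Pi.sub_apply, Pi.mul_apply]
    ring
  · refine HasDerivAt.congr_deriv (((DA.mul DB).mul DC).const_mul (-4)) ?_
    simp only [Pi.sub_apply, Pi.mul_apply]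
    ring
end
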